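/- In the four-agent example economy with preference profile ≻'_I, every individually rational allocation p satisfies p_{2,o_1} = 1/2 and p_{4,o_4} = 1/2. -/

import Mathlib

open Finset

open Classical in
/-- The total amount that assignment `x` allocates to objects weakly preferred
(under strict preference `pr`) to object `o`. -/
noncomputable def upperSum {n : ℕ} (pr : Fin n → Fin n → Prop) (x : Fin n → ℝ) (o : Fin n) : ℝ :=
  ∑ o' ∈ Finset.univ, if pr o' o ∨ o' = o then x o' else 0

/-- `p` weakly (first-order) stochastically dominates `q` with respect to `pr`. -/
def SdDom {n : ℕ} (pr : Fin n → Fin n → Prop) (p q : Fin n → ℝ) : Prop :=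
  ∀ o, upperSum pr q o ≤ upperSum pr p o

/-- `p` strictly (first-order) stochastically dominates `q` with respect to `pr`. -/
def SdStrict {n : ℕ} (pr : Fin n → Fin n → Prop) (p q : Fin n → ℝ) : Prop :=
  SdDom pr p q ∧ ∃ o, upperSum pr q o < upperSum pr p o

/-- A housing market economy with fractional endowments: `n` agents, `n` objects,
each agent has a strict (linear order) preference over objects and the endowment
matrix is doubly stochastic. -/
structure Economy (n : ℕ) where
  pref : Fin n → Fin n → Fin n → Prop
  pref_irrefl : ∀ i o, ¬ pref i o o
  pref_trans : ∀ i o₁ o₂ o₃, pref i o₁ o₂ → pref i o₂ o₃ → pref i o₁ o₃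
  pref_total : ∀ i o o', o ≠ o' → pref i o o' ∨ pref i o' o
  endow : Fin n → Fin n → ℝ
  endow_nonneg : ∀ i o, 0 ≤ endow i o
  endow_row : ∀ i, ∑ o, endow i o = 1
  endow_col : ∀ o, ∑ i, endow i o = 1

/-- An allocation is a doubly stochastic matrix. -/
def IsAllocation {n : ℕ} (p : Fin n → Fin n → ℝ) : Prop :=
  (∀ i o, 0 ≤ p i o ∧ p i o ≤ 1) ∧ (∀ i, ∑ o, p i o = 1) ∧ (∀ o, ∑ i, p i o = 1)

/-- Individual rationality. -/
def IR {n : ℕ} (E : Economy n) (p : Fin n → Fin n → ℝ) : Prop :=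
  ∀ i, SdDom (E.pref i) (p i) (E.endow i)

/-- Coalition `I'` weakly blocks allocation `p` via allocation `p'`. -/
def WeaklyBlocks {n : ℕ} (E : Economy n) (I' : Finset (Fin n))
    (p p' : Fin n → Fin n → ℝ) : Prop :=
  (∀ o, ∑ i ∈ I', p' i o = ∑ i ∈ I', E.endow i o) ∧
  (∀ i ∈ I', SdDom (E.pref i) (p' i) (p i)) ∧
  (∃ j ∈ I', SdStrict (E.pref j) (p' j) (p j))

/-- Coalition `I'` strongly blocks allocation `p` via allocation `p'`. -/
def StronglyBlocks {n : ℕ} (E : Economy n) (I' : Finset (Fin n))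
    (p p' : Fin n → Fin n → ℝ) : Prop :=
  (∀ o, ∑ i ∈ I', p' i o = ∑ i ∈ I', E.endow i o) ∧
  (∀ i ∈ I', SdStrict (E.pref i) (p' i) (p i))

/-- The strong core: IR allocations not weakly blocked by any non-singleton coalition. -/
def InStrongCore {n : ℕ} (E : Economy n) (p : Fin n → Fin n → ℝ) : Prop :=
  IsAllocation p ∧ IR E p ∧
    ¬ ∃ (I' : Finset (Fin n)) (p' : Fin n → Fin n → ℝ),
        1 < I'.card ∧ IsAllocation p' ∧ WeaklyBlocks E I' p p'

/-- The weak core: IR allocations not strongly blocked by any non-singleton coalition. -/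
def InWeakCore {n : ℕ} (E : Economy n) (p : Fin n → Fin n → ℝ) : Prop :=
  IsAllocation p ∧ IR E p ∧
    ¬ ∃ (I' : Finset (Fin n)) (p' : Fin n → Fin n → ℝ),
        1 < I'.card ∧ IsAllocation p' ∧ StronglyBlocks E I' p p'

/-- Equal treatment of equals. -/
def ETE {n : ℕ} (E : Economy n) (p : Fin n → Fin n → ℝ) : Prop :=
  ∀ i j, E.endow i = E.endow j → E.pref i = E.pref j → p i = p j

/-- Equal-endowment no envy. -/
def EENE {n : ℕ} (E : Economy n) (p : Fin n → Fin n → ℝ) : Prop :=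
  ∀ i j, E.endow i = E.endow j →
    SdDom (E.pref i) (p i) (p j) ∧ SdDom (E.pref j) (p j) (p i)

/-- Endowments of the four-agent example economy:
agents 1 and 2 each own 1/2 of o1 and 1/2 of o3;
agents 3 and 4 each own 1/2 of o2 and 1/2 of o4. -/
noncomputable def endowEx : Fin 4 → Fin 4 → ℝ :=
  ![![1/2, 0, 1/2, 0], ![1/2, 0, 1/2, 0], ![0, 1/2, 0, 1/2], ![0, 1/2, 0, 1/2]]

/-- Rankings encoding the preference profile ≻'_I (lower rank = more preferred):
agent 1: o2 ≻ o1 ≻ o4 ≻ o3; agent 2: o1 ≻ o2 ≻ o4 ≻ o3;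
agent 3: o1 ≻ o2 ≻ o3 ≻ o4; agent 4: o1 ≻ o2 ≻ o4 ≻ o3. -/
def rankB : Fin 4 → Fin 4 → ℕ :=
  ![![1, 0, 3, 2], ![0, 1, 3, 2], ![0, 1, 2, 3], ![0, 1, 3, 2]]

/-- The four-agent example economy with preference profile ≻'_I. -/
noncomputable def economyB : Economy 4 where
  pref := fun i o o' => rankB i o < rankB i o'
  pref_irrefl := fun _ _ => lt_irrefl _
  pref_trans := fun _ _ _ _ => Nat.lt_trans
  pref_total := by decide
  endow := endowEx
  endow_nonneg := by
    intro i o; fin_cases i <;> fin_cases o <;>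
      norm_num [endowEx, Matrix.cons_val_zero, Matrix.cons_val_one, Matrix.head_cons,
        Matrix.cons_val_succ, Matrix.vecHead, Matrix.vecTail]
  endow_row := by
    intro i; fin_cases i <;>
      norm_num [endowEx, Fin.sum_univ_four, Matrix.cons_val_zero, Matrix.cons_val_one,
        Matrix.head_cons, Matrix.cons_val_succ, Matrix.vecHead, Matrix.vecTail, Matrix.cons_val_two, Matrix.cons_val_three]
  endow_col := by
    intro o; fin_cases o <;>
      norm_num [endowEx, Fin.sum_univ_four, Matrix.cons_val_zero, Matrix.cons_val_one,
        Matrix.head_cons, Matrix.cons_val_succ, Matrix.vecHead, Matrix.vecTail, Matrix.cons_val_two, Matrix.cons_val_three]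

/-- in the example economy with profile ≻'_I, every IR allocation gives
agent 2 his endowed 1/2 of o1 and agent 4 his endowed 1/2 of o4. -/
theorem ir_pins_down_exampleB (p : Fin 4 → Fin 4 → ℝ)
    (hp : IsAllocation p) (hIR : IR economyB p) :
    p 1 0 = 1 / 2 ∧ p 3 3 = 1 / 2 := by
  have h10 := hIR 1 0
  have h11 := hIR 1 1
  have h00 := hIR 0 0
  have h21 := hIR 2 1
  have h31 := hIR 3 1
  have h33 := hIR 3 3
  simp only [upperSum, economyB, rankB, endowEx, Fin.sum_univ_four,
    Matrix.cons_val_zero, Matrix.cons_val_one, Matrix.head_cons,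
    Matrix.cons_val_two, Matrix.cons_val_three, Matrix.tail_cons, Matrix.head_fin_const] at h10 h11 h00 h21 h31 h33
  norm_num [Fin.ext_iff, show ((3:Fin 4):ℕ) = 3 from rfl, show ((2:Fin 4):ℕ) = 2 from rfl] at h10 h11 h00 h21 h31 h33
  have c0 := hp.2.2 0
  have c1 := hp.2.2 1
  have r3 := hp.2.1 3
  simp only [Fin.sum_univ_four] at c0 c1 r3
  have n11 := (hp.1 1 1).1
  have n32 := (hp.1 3 2).1
  constructor <;> linarith
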